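/- (Prékopa-type theorem on Wiener space, finite-dimensional consequence) Let g: ℝ^d × ℝ → ℝ be measurable such that (x,λ) ↦ g(x,λ) − |x|²/2 is concave, and suppose for each λ that E[(max{−g(Z,λ),0})^{1+δ}] < ∞ for some δ > 0, where Z is a standard d-dimensional Gaussian. Then λ ↦ log E[e^{g(Z,λ)}] ∈ (−∞, ∞] is concave. -/

import Mathlib

/-!
Under the standard Gaussian measure, `e^{g(x,λ)}` integrates against the density
`(2π)^{-d/2} e^{-|x|²/2}`, so `E[e^{g(Z,λ)}] = ∫ e^{G(x,λ)} dx` with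
`G = g - |x|²/2 - (d/2) log 2π` jointly concave. The claim is then Prékopa's theorem: marginals
of log-concave functions are log-concave. It follows from the Prékopa–Leindler inequality on `ℝ^d`
applied to the slices `x ↦ e^{G(x,λᵢ)}`. Prékopa–Leindler passes to products by Fubini, and on `ℝ`
it comes from integrating the Brunn–Minkowski inequality `|A| + |B| ≤ |A + B|` over the superlevel
sets `{f > s sup f}`, `s ∈ (0,1)`, which are nonempty, followed by the weighted AM-GM inequality.
-/

open MeasureTheory ProbabilityTheory Set
open scoped ENNReal Pointwise

theorem ENNReal.geom_mean_le_arith_mean2_weighted {θ : ℝ} (h₀ : 0 < θ) (h₁ : θ < 1)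
    (u v : ℝ≥0∞) :
    u ^ θ * v ^ (1 - θ) ≤ ENNReal.ofReal θ * u + ENNReal.ofReal (1 - θ) * v := by
  have hθ : θ⁻¹ * θ = 1 := inv_mul_cancel₀ h₀.ne'
  have hθ' : (1 - θ)⁻¹ * (1 - θ) = 1 := inv_mul_cancel₀ (sub_pos.2 h₁).ne'
  have := ENNReal.young_inequality (u ^ θ) (v ^ (1 - θ))
    (Real.HolderConjugate.inv_one_sub_inv h₀ h₁)
  rwa [← ENNReal.rpow_mul, ← ENNReal.rpow_mul, mul_comm θ, mul_comm (1 - θ), hθ, hθ',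
    ENNReal.rpow_one, ENNReal.rpow_one, ENNReal.ofReal_inv_of_pos h₀,
    ENNReal.ofReal_inv_of_pos (sub_pos.2 h₁), div_eq_mul_inv, inv_inv, div_eq_mul_inv, inv_inv,
    mul_comm u, mul_comm v] at this

theorem ENNReal.iSup_mul_iSup_le_of_monotone {ι : Type*} [Preorder ι] [IsDirectedOrder ι]
    {u v : ι → ℝ≥0∞} (hu : Monotone u) (hv : Monotone v) {c : ℝ≥0∞}
    (h : ∀ i, u i * v i ≤ c) : (⨆ i, u i) * ⨆ i, v i ≤ c := by
  simp_rw [ENNReal.iSup_mul, ENNReal.mul_iSup]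
  refine iSup₂_le fun i j => ?_
  obtain ⟨k, hik, hjk⟩ := directed_of (· ≤ ·) i j
  exact (mul_le_mul' (hu hik) (hv hjk)).trans (h k)

namespace MeasureTheory

variable {α : Type*} [MeasurableSpace α]

theorem lintegral_eq_iSup_lintegral_min_natCast (μ : Measure α) {f : α → ℝ≥0∞}
    (hf : Measurable f) : ∫⁻ x, f x ∂μ = ⨆ n : ℕ, ∫⁻ x, min (f x) n ∂μ := by
  rw [← lintegral_iSup (fun n => hf.min measurable_const)
    fun n m hnm x => min_le_min_left _ (Nat.mono_cast hnm)]
  simp_rw [← inf_iSup_eq, ENNReal.iSup_natCast, inf_top_eq]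

theorem volume_restrict_Ioo_setOf_ofReal_lt (c : ℝ≥0∞) :
    volume.restrict (Ioo (0 : ℝ) 1) {s | ENNReal.ofReal s < c} = min c 1 := by
  have hc : min c 1 ≠ ∞ := (min_le_right c 1).trans_lt ENNReal.one_lt_top |>.ne
  have hset : {s : ℝ | ENNReal.ofReal s < c} ∩ Ioo 0 1 = Ioo 0 (min c 1).toReal := by
    ext s
    simp only [mem_inter_iff, mem_ofPred_eq, mem_Ioo]
    constructor
    · rintro ⟨hsc, hs₀, hs₁⟩
      refine ⟨hs₀, (ENNReal.ofReal_lt_iff_lt_toReal hs₀.le hc).1 (lt_min hsc ?_)⟩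
      simpa using hs₁
    · rintro ⟨hs₀, hs⟩
      have hsc := (ENNReal.ofReal_lt_iff_lt_toReal hs₀.le hc).2 hs
      exact ⟨hsc.trans_le (min_le_left _ _), hs₀,
        by simpa using hsc.trans_le (min_le_right _ _)⟩
  rw [Measure.restrict_apply (measurableSet_lt ENNReal.measurable_ofReal measurable_const), hset,
    Real.volume_Ioo, sub_zero, ENNReal.ofReal_toReal hc]

/-- Layer-cake formula on the levels `s A`, `0 < s < 1`. -/
theorem lintegral_Ioo_measure_ofReal_mul_lt (μ : Measure α) [SFinite μ] {f : α → ℝ≥0∞}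
    (hf : Measurable f) {A : ℝ≥0∞} (hA₀ : A ≠ 0) (hA : A ≠ ∞) :
    ∫⁻ s in Ioo (0 : ℝ) 1, μ {x | ENNReal.ofReal s * A < f x} =
      ∫⁻ x, min (f x / A) 1 ∂μ := by
  have hT : MeasurableSet {p : ℝ × α | ENNReal.ofReal p.1 * A < f p.2} :=
    measurableSet_lt ((ENNReal.measurable_ofReal.comp measurable_fst).mul_const A)
      (hf.comp measurable_snd)
  calc _ = (volume.restrict (Ioo (0 : ℝ) 1)).prod μ {p | ENNReal.ofReal p.1 * A < f p.2} :=
        (Measure.prod_apply hT).symm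
    _ = _ := by
      rw [Measure.prod_apply_symm hT]
      refine lintegral_congr fun x => ?_
      simp_rw [← volume_restrict_Ioo_setOf_ofReal_lt,
        ENNReal.lt_div_iff_mul_lt (Or.inl hA₀) (Or.inl hA)]
      rfl

theorem lintegral_fin_nat_prod_eq_prod {n : ℕ} {μ : Fin n → Measure α} [∀ i, SigmaFinite (μ i)]
    {f : Fin n → α → ℝ≥0∞} (hf : ∀ i, Measurable (f i)) :
    ∫⁻ x, ∏ i, f i (x i) ∂Measure.pi μ = ∏ i, ∫⁻ x, f i x ∂μ i := by
  induction n with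
  | zero => simp
  | succ n ih =>
    have hprod : Measurable fun x : Fin (n + 1) → α => ∏ i, f i (x i) :=
      Finset.measurable_prod _ fun i _ => (hf i).comp (measurable_pi_apply i)
    have htail : Measurable fun y : Fin n → α => ∏ i, f i.succ (y i) :=
      Finset.measurable_prod _ fun i _ => (hf i.succ).comp (measurable_pi_apply i)
    rw [← (measurePreserving_piFinSuccAbove μ 0).symm.lintegral_comp hprod]
    simp_rw [MeasurableEquiv.piFinSuccAbove_symm_apply, Fin.insertNthEquiv,
      Fin.prod_univ_succ, Fin.insertNth_zero, Equiv.coe_fn_mk, Fin.cons_succ,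
      Fin.zero_succAbove, cast_eq, Fin.cons_zero]
    rw [lintegral_prod_mul (hf 0).aemeasurable htail.aemeasurable, ih fun i => hf i.succ]

theorem Measure.pi_withDensity {n : ℕ} (μ : Fin n → Measure α) [∀ i, SigmaFinite (μ i)]
    {f : Fin n → α → ℝ≥0∞} (hf : ∀ i, Measurable (f i))
    [∀ i, SigmaFinite ((μ i).withDensity (f i))] :
    Measure.pi (fun i => (μ i).withDensity (f i)) =
      (Measure.pi μ).withDensity fun x => ∏ i, f i (x i) := by
  refine Measure.pi_eq fun s hs => ?_
  rw [withDensity_apply _ (MeasurableSet.univ_pi hs), Measure.restrict_pi_pi,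
    lintegral_fin_nat_prod_eq_prod hf]
  simp_rw [withDensity_apply _ (hs _)]

end MeasureTheory

namespace Real

theorem volume_add_volume_le_volume_add_of_isCompact {K L : Set ℝ} (hK : IsCompact K)
    (hL : IsCompact L) (hK₀ : K.Nonempty) (hL₀ : L.Nonempty) :
    volume K + volume L ≤ volume (K + L) := by
  set a := sInf K
  set b := sSup L
  have ha : a ∈ K := hK.sInf_mem hK₀
  have hb : b ∈ L := hL.sSup_mem hL₀
  -- the translates `b + K` and `a + L` inside `K + L` meet only at `a + b`
  have hinter : (b +ᵥ K) ∩ (a +ᵥ L) ⊆ {a + b} := by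
    rintro _ ⟨⟨k, hk, rfl⟩, ⟨l, hl, hkl⟩⟩
    have : a ≤ k := csInf_le hK.bddBelow hk
    have : l ≤ b := le_csSup hL.bddAbove hl
    exact mem_singleton_iff.2 (by simp only [vadd_eq_add] at hkl ⊢; linarith)
  calc volume K + volume L = volume (b +ᵥ K) + volume (a +ᵥ L) := by
        rw [measure_vadd, measure_vadd]
    _ = volume ((b +ᵥ K) ∪ (a +ᵥ L)) := by
        rw [← measure_union_add_inter _ (hL.vadd a).measurableSet,
          measure_mono_null hinter volume_singleton, add_zero]
    _ ≤ volume (K + L) := by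
        refine measure_mono (union_subset ?_ (vadd_set_subset_add ha))
        rw [add_comm]
        exact vadd_set_subset_add hb

theorem volume_add_volume_le_volume_add {A B : Set ℝ} (hA : MeasurableSet A)
    (hB : MeasurableSet B) (hA₀ : A.Nonempty) (hB₀ : B.Nonempty) :
    volume A + volume B ≤ volume (A + B) := by
  obtain ⟨a, ha⟩ := hA₀
  obtain ⟨b, hb⟩ := hB₀
  rw [hA.measure_eq_iSup_isCompact, hB.measure_eq_iSup_isCompact]
  simp_rw [iSup_and']
  refine ENNReal.biSup_add_biSup_le' ⟨∅, empty_subset _, isCompact_empty⟩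
    ⟨∅, empty_subset _, isCompact_empty⟩ fun K ⟨hKA, hK⟩ L ⟨hLB, hL⟩ => ?_
  calc volume K + volume L ≤ volume (insert a K) + volume (insert b L) :=
        add_le_add (measure_mono (subset_insert _ _)) (measure_mono (subset_insert _ _))
    _ ≤ volume (insert a K + insert b L) :=
        volume_add_volume_le_volume_add_of_isCompact (hK.insert a) (hL.insert b)
          (insert_nonempty _ _) (insert_nonempty _ _)
    _ ≤ volume (A + B) :=
        measure_mono (add_subset_add (insert_subset ha hKA) (insert_subset hb hLB))

theorem volume_smul_of_pos {r : ℝ} (hr : 0 < r) (s : Set ℝ) :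
    volume (r • s) = ENNReal.ofReal r * volume s := by
  rw [Measure.addHaar_smul, Module.finrank_self, pow_one, abs_of_pos hr]

section PrekopaLeindler

variable {θ : ℝ} {f g h : ℝ → ℝ≥0∞}

theorem volume_superlevel_add_le (h₀ : 0 < θ) (h₁ : θ < 1) (hf : Measurable f)
    (hg : Measurable g) (hfgh : ∀ x y, f x ^ θ * g y ^ (1 - θ) ≤ h (θ * x + (1 - θ) * y))
    {a b : ℝ≥0∞} (ha : ∃ x, a < f x) (hb : ∃ y, b < g y) :
    ENNReal.ofReal θ * volume {x | a < f x} + ENNReal.ofReal (1 - θ) * volume {y | b < g y} ≤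
      volume {z | a ^ θ * b ^ (1 - θ) < h z} := by
  have h₁' : 0 < 1 - θ := sub_pos.2 h₁
  have hsub : θ • {x | a < f x} + (1 - θ) • {y | b < g y} ⊆
      {z | a ^ θ * b ^ (1 - θ) < h z} := by
    rintro _ ⟨_, ⟨x, hx, rfl⟩, _, ⟨y, hy, rfl⟩, rfl⟩
    exact (ENNReal.mul_lt_mul (ENNReal.rpow_lt_rpow hx h₀)
      (ENNReal.rpow_lt_rpow hy h₁')).trans_le (hfgh x y)
  rw [← volume_smul_of_pos h₀, ← volume_smul_of_pos h₁']
  refine (volume_add_volume_le_volume_add ?_ ?_ ?_ ?_).trans (measure_mono hsub)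
  · exact (measurableSet_lt measurable_const hf).const_smul₀ θ
  · exact (measurableSet_lt measurable_const hg).const_smul₀ (1 - θ)
  · exact Nonempty.smul_set ha
  · exact Nonempty.smul_set hb

theorem volume_superlevel_ofReal_mul_iSup_add_le (h₀ : 0 < θ) (h₁ : θ < 1) (hf : Measurable f)
    (hg : Measurable g) (hfgh : ∀ x y, f x ^ θ * g y ^ (1 - θ) ≤ h (θ * x + (1 - θ) * y))
    (hf₀ : ⨆ x, f x ≠ 0) (hf_top : ⨆ x, f x ≠ ∞) (hg₀ : ⨆ x, g x ≠ 0) (hg_top : ⨆ x, g x ≠ ∞)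
    {s : ℝ} (hs : s ∈ Ioo (0 : ℝ) 1) :
    ENNReal.ofReal θ * volume {x | ENNReal.ofReal s * (⨆ x, f x) < f x} +
        ENNReal.ofReal (1 - θ) * volume {y | ENNReal.ofReal s * (⨆ x, g x) < g y} ≤
      volume {z | ENNReal.ofReal s * ((⨆ x, f x) ^ θ * (⨆ x, g x) ^ (1 - θ)) < h z} := by
  have hs₁ : ENNReal.ofReal s < 1 := ENNReal.ofReal_lt_one.2 hs.2
  have hsM : (ENNReal.ofReal s * ⨆ x, f x) ^ θ * (ENNReal.ofReal s * ⨆ x, g x) ^ (1 - θ) =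
      ENNReal.ofReal s * ((⨆ x, f x) ^ θ * (⨆ x, g x) ^ (1 - θ)) := by
    rw [ENNReal.mul_rpow_of_nonneg _ _ h₀.le, ENNReal.mul_rpow_of_nonneg _ _ (sub_pos.2 h₁).le,
      mul_mul_mul_comm, ← ENNReal.rpow_add _ _ (by simpa using hs.1) ENNReal.ofReal_ne_top]
    simp
  rw [← hsM]
  exact volume_superlevel_add_le h₀ h₁ hf hg hfgh
    (lt_iSup_iff.1 (by simpa using ENNReal.mul_lt_mul_left hf₀ hf_top hs₁))
    (lt_iSup_iff.1 (by simpa using ENNReal.mul_lt_mul_left hg₀ hg_top hs₁))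

theorem ofReal_mul_lintegral_div_iSup_add_le (h₀ : 0 < θ) (h₁ : θ < 1) (hf : Measurable f)
    (hg : Measurable g) (hh : Measurable h)
    (hfgh : ∀ x y, f x ^ θ * g y ^ (1 - θ) ≤ h (θ * x + (1 - θ) * y))
    (hf₀ : ⨆ x, f x ≠ 0) (hf_top : ⨆ x, f x ≠ ∞) (hg₀ : ⨆ x, g x ≠ 0) (hg_top : ⨆ x, g x ≠ ∞) :
    ENNReal.ofReal θ * ((∫⁻ x, f x) / ⨆ x, f x) +
        ENNReal.ofReal (1 - θ) * ((∫⁻ x, g x) / ⨆ x, g x) ≤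
      (∫⁻ x, h x) / ((⨆ x, f x) ^ θ * (⨆ x, g x) ^ (1 - θ)) := by
  set A := ⨆ x, f x
  set B := ⨆ x, g x
  set M := A ^ θ * B ^ (1 - θ)
  have hM₀ : M ≠ 0 := mul_ne_zero (ENNReal.rpow_pos (pos_iff_ne_zero.2 hf₀) hf_top).ne'
    (ENNReal.rpow_pos (pos_iff_ne_zero.2 hg₀) hg_top).ne'
  have hM : M ≠ ∞ := ENNReal.mul_ne_top (ENNReal.rpow_ne_top_of_nonneg h₀.le hf_top)
    (ENNReal.rpow_ne_top_of_nonneg (sub_pos.2 h₁).le hg_top)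
  have hfA : ∀ x, min (f x / A) 1 = f x / A := fun x =>
    min_eq_left ((ENNReal.div_le_iff hf₀ hf_top).2 (by simpa using le_iSup f x))
  have hgB : ∀ y, min (g y / B) 1 = g y / B := fun y =>
    min_eq_left ((ENNReal.div_le_iff hg₀ hg_top).2 (by simpa using le_iSup g y))
  have hmeas : ∀ (F : ℝ → ℝ≥0∞) (C : ℝ≥0∞),
      Measurable fun s : ℝ => volume {x | ENNReal.ofReal s * C < F x} := fun F C =>
    Antitone.measurable fun s t hst => measure_mono fun x hx =>
      (mul_le_mul_left (ENNReal.ofReal_le_ofReal hst) C).trans_lt hx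
  calc _ = ∫⁻ s in Ioo (0 : ℝ) 1,
        (ENNReal.ofReal θ * volume {x | ENNReal.ofReal s * A < f x} +
          ENNReal.ofReal (1 - θ) * volume {y | ENNReal.ofReal s * B < g y}) := by
        rw [lintegral_add_left ((hmeas f A).const_mul _), lintegral_const_mul _ (hmeas f A),
          lintegral_const_mul _ (hmeas g B), lintegral_Ioo_measure_ofReal_mul_lt _ hf hf₀ hf_top,
          lintegral_Ioo_measure_ofReal_mul_lt _ hg hg₀ hg_top]
        simp_rw [hfA, hgB, div_eq_mul_inv, lintegral_mul_const _ hf, lintegral_mul_const _ hg]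
    _ ≤ ∫⁻ s in Ioo (0 : ℝ) 1, volume {z | ENNReal.ofReal s * M < h z} :=
        setLIntegral_mono (hmeas h M) fun s hs =>
          volume_superlevel_ofReal_mul_iSup_add_le h₀ h₁ hf hg hfgh hf₀ hf_top hg₀ hg_top hs
    _ ≤ (∫⁻ z, h z) / M := by
        rw [lintegral_Ioo_measure_ofReal_mul_lt _ hh hM₀ hM, div_eq_mul_inv,
          ← lintegral_mul_const _ hh]
        exact lintegral_mono fun z => min_le_left _ _

theorem lintegral_rpow_mul_rpow_le_of_iSup_ne_top (h₀ : 0 < θ) (h₁ : θ < 1)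
    (hf : Measurable f) (hg : Measurable g) (hh : Measurable h)
    (hfgh : ∀ x y, f x ^ θ * g y ^ (1 - θ) ≤ h (θ * x + (1 - θ) * y))
    (hf_top : ⨆ x, f x ≠ ∞) (hg_top : ⨆ x, g x ≠ ∞) :
    (∫⁻ x, f x) ^ θ * (∫⁻ x, g x) ^ (1 - θ) ≤ ∫⁻ x, h x := by
  have h₁' : 0 < 1 - θ := sub_pos.2 h₁
  rcases eq_or_ne (⨆ x, f x) 0 with hf₀ | hf₀
  · simp [funext (iSup_eq_bot.1 hf₀), ENNReal.zero_rpow_of_pos h₀]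
  rcases eq_or_ne (⨆ x, g x) 0 with hg₀ | hg₀
  · simp [funext (iSup_eq_bot.1 hg₀), ENNReal.zero_rpow_of_pos h₁']
  calc (∫⁻ x, f x) ^ θ * (∫⁻ x, g x) ^ (1 - θ)
      = ((⨆ x, f x) ^ θ * (⨆ x, g x) ^ (1 - θ)) *
          (((∫⁻ x, f x) / ⨆ x, f x) ^ θ * ((∫⁻ x, g x) / ⨆ x, g x) ^ (1 - θ)) := by
        conv_lhs => rw [← ENNReal.mul_div_cancel (b := ∫⁻ x, f x) hf₀ hf_top,
          ← ENNReal.mul_div_cancel (b := ∫⁻ x, g x) hg₀ hg_top]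
        rw [ENNReal.mul_rpow_of_nonneg _ _ h₀.le, ENNReal.mul_rpow_of_nonneg _ _ h₁'.le]
        ring
    _ ≤ ((⨆ x, f x) ^ θ * (⨆ x, g x) ^ (1 - θ)) *
          ((∫⁻ x, h x) / ((⨆ x, f x) ^ θ * (⨆ x, g x) ^ (1 - θ))) := by
        gcongr
        exact (ENNReal.geom_mean_le_arith_mean2_weighted h₀ h₁ _ _).trans
          (ofReal_mul_lintegral_div_iSup_add_le h₀ h₁ hf hg hh hfgh hf₀ hf_top hg₀ hg_top)
    _ ≤ ∫⁻ x, h x := ENNReal.mul_div_le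

theorem lintegral_rpow_mul_rpow_le (h₀ : 0 < θ) (h₁ : θ < 1)
    (hf : Measurable f) (hg : Measurable g) (hh : Measurable h)
    (hfgh : ∀ x y, f x ^ θ * g y ^ (1 - θ) ≤ h (θ * x + (1 - θ) * y)) :
    (∫⁻ x, f x) ^ θ * (∫⁻ x, g x) ^ (1 - θ) ≤ ∫⁻ x, h x := by
  have h₁' : 0 < 1 - θ := sub_pos.2 h₁
  have hmono : ∀ F : ℝ → ℝ≥0∞, Monotone fun n : ℕ => ∫⁻ x, min (F x) n := fun F _ _ hnm =>
    lintegral_mono fun x => min_le_min_left _ (Nat.mono_cast hnm)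
  have hbdd : ∀ (F : ℝ → ℝ≥0∞) (n : ℕ), ⨆ x, min (F x) n ≠ ∞ := fun F n =>
    ne_top_of_le_ne_top (ENNReal.natCast_ne_top n) (iSup_le fun x => min_le_right _ _)
  rw [lintegral_eq_iSup_lintegral_min_natCast _ hf, lintegral_eq_iSup_lintegral_min_natCast _ hg,
    ← ENNReal.orderIsoRpow_apply θ h₀, ← ENNReal.orderIsoRpow_apply (1 - θ) h₁',
    OrderIso.map_iSup, OrderIso.map_iSup]
  refine ENNReal.iSup_mul_iSup_le_of_monotone
    (fun n m hnm => ENNReal.rpow_le_rpow (hmono f hnm) h₀.le)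
    (fun n m hnm => ENNReal.rpow_le_rpow (hmono g hnm) h₁'.le) fun n => ?_
  refine lintegral_rpow_mul_rpow_le_of_iSup_ne_top h₀ h₁ (hf.min measurable_const)
    (hg.min measurable_const) hh (fun x y => ?_) (hbdd f n) (hbdd g n)
  exact (mul_le_mul' (ENNReal.rpow_le_rpow (min_le_left _ _) h₀.le)
    (ENNReal.rpow_le_rpow (min_le_left _ _) h₁'.le)).trans (hfgh x y)

end PrekopaLeindler

end Real

def MeasureTheory.Measure.IsPrekopaLeindler {E : Type*} [MeasurableSpace E] [AddCommMonoid E]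
    [Module ℝ E] (μ : Measure E) : Prop :=
  ∀ ⦃θ : ℝ⦄, 0 < θ → θ < 1 → ∀ ⦃f g h : E → ℝ≥0∞⦄, Measurable f → Measurable g → Measurable h →
    (∀ x y, f x ^ θ * g y ^ (1 - θ) ≤ h (θ • x + (1 - θ) • y)) →
    (∫⁻ x, f x ∂μ) ^ θ * (∫⁻ x, g x ∂μ) ^ (1 - θ) ≤ ∫⁻ x, h x ∂μ

namespace MeasureTheory.Measure.IsPrekopaLeindler

variable {E F : Type*} [MeasurableSpace E] [AddCommMonoid E] [Module ℝ E]
  [MeasurableSpace F] [AddCommMonoid F] [Module ℝ F] {μ : Measure E} {ν : Measure F}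

theorem real_volume : (volume : Measure ℝ).IsPrekopaLeindler :=
  fun _ h₀ h₁ _ _ _ hf hg hh hfgh => Real.lintegral_rpow_mul_rpow_le h₀ h₁ hf hg hh hfgh

theorem prod [SFinite μ] [SFinite ν] (hμ : μ.IsPrekopaLeindler) (hν : ν.IsPrekopaLeindler) :
    (μ.prod ν).IsPrekopaLeindler := by
  intro θ h₀ h₁ f g h hf hg hh hfgh
  rw [lintegral_prod f hf.aemeasurable, lintegral_prod g hg.aemeasurable,
    lintegral_prod h hh.aemeasurable]
  refine hμ h₀ h₁ hf.lintegral_prod_right' hg.lintegral_prod_right' hh.lintegral_prod_right'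
    fun x y => hν h₀ h₁ (hf.comp measurable_prodMk_left) (hg.comp measurable_prodMk_left)
      (hh.comp measurable_prodMk_left) fun s t => ?_
  simpa using hfgh (x, s) (y, t)

theorem of_measurePreserving (hν : ν.IsPrekopaLeindler) (e : F →ₗ[ℝ] E)
    (he : MeasurePreserving e ν μ) : μ.IsPrekopaLeindler := by
  intro θ h₀ h₁ f g h hf hg hh hfgh
  rw [← he.lintegral_comp hf, ← he.lintegral_comp hg, ← he.lintegral_comp hh]
  refine hν h₀ h₁ (hf.comp he.measurable) (hg.comp he.measurable) (hh.comp he.measurable)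
    fun x y => ?_
  simpa using hfgh (e x) (e y)

theorem volume_pi (d : ℕ) : (volume : Measure (Fin d → ℝ)).IsPrekopaLeindler := by
  induction d with
  | zero =>
    intro θ _ _ f g h _ _ _ hfgh
    have hvol : (volume : Measure (Fin 0 → ℝ)) univ = 1 := by simp [MeasureTheory.volume_pi]
    simp only [lintegral_unique, hvol, mul_one]
    convert hfgh 0 0 using 4
  | succ d ih =>
    have he : ⇑(Fin.consLinearEquiv ℝ fun _ : Fin (d + 1) => ℝ) =
        (MeasurableEquiv.piFinSuccAbove (fun _ : Fin (d + 1) => ℝ) 0).symm := by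
      ext x i
      simp [Fin.insertNthEquiv, Fin.insertNth_zero']
    refine (real_volume.prod ih).of_measurePreserving
      (Fin.consLinearEquiv ℝ fun _ : Fin (d + 1) => ℝ).toLinearMap ?_
    rw [LinearEquiv.coe_coe, he]
    exact (volume_preserving_piFinSuccAbove (fun _ : Fin (d + 1) => ℝ) 0).symm

end MeasureTheory.Measure.IsPrekopaLeindler

/-- **Prékopa's theorem**. -/
theorem ConcaveOn.lintegral_exp_rpow_mul_rpow_le {d : ℕ} {E : Type*} [AddCommGroup E]
    [Module ℝ E] {G : (Fin d → ℝ) × E → ℝ} (hG : ConcaveOn ℝ univ G) (c₁ c₂ : E) {θ : ℝ}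
    (hθ : θ ∈ Icc (0 : ℝ) 1) :
    (∫⁻ x, ENNReal.ofReal (Real.exp (G (x, c₁)))) ^ θ *
        (∫⁻ x, ENNReal.ofReal (Real.exp (G (x, c₂)))) ^ (1 - θ) ≤
      ∫⁻ x, ENNReal.ofReal (Real.exp (G (x, θ • c₁ + (1 - θ) • c₂))) := by
  rcases hθ.1.eq_or_lt with rfl | h₀
  · simp
  rcases hθ.2.eq_or_lt with rfl | h₁
  · simp
  -- each slice is concave on `ℝ^d`, hence continuous and measurable
  have hslice : ∀ c, Measurable fun x => ENNReal.ofReal (Real.exp (G (x, c))) := by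
    intro c
    have hconc : ConcaveOn ℝ univ fun x => G (x, c) :=
      ⟨convex_univ, fun x _ y _ a b ha hb hab => by
        simpa [Convex.combo_self hab c] using hG.2 (mem_univ (x, c)) (mem_univ (y, c)) ha hb hab⟩
    exact ENNReal.measurable_ofReal.comp (Real.measurable_exp.comp
      (continuousOn_univ.1 (hconc.continuousOn isOpen_univ)).measurable)
  refine Measure.IsPrekopaLeindler.volume_pi d h₀ h₁ (hslice c₁) (hslice c₂) (hslice _)
    fun x y => ?_
  rw [ENNReal.ofReal_rpow_of_pos (Real.exp_pos _), ENNReal.ofReal_rpow_of_pos (Real.exp_pos _),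
    ← Real.exp_mul, ← Real.exp_mul, ← ENNReal.ofReal_mul (Real.exp_pos _).le, ← Real.exp_add]
  refine ENNReal.ofReal_le_ofReal (Real.exp_le_exp.2 ?_)
  simpa [mul_comm] using hG.2 (mem_univ (x, c₁)) (mem_univ (y, c₂)) h₀.le (sub_pos.2 h₁).le
    (add_sub_cancel θ 1)

theorem pi_gaussianReal_eq_withDensity (d : ℕ) :
    Measure.pi (fun _ : Fin d => gaussianReal 0 1) =
      volume.withDensity fun x => ∏ i, gaussianPDF 0 1 (x i) := by
  have hγ : gaussianReal 0 1 = volume.withDensity (gaussianPDF 0 1) :=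
    gaussianReal_of_var_ne_zero 0 one_ne_zero
  have : SigmaFinite (volume.withDensity (gaussianPDF 0 1)) := hγ ▸ inferInstance
  simp_rw [hγ]
  rw [Measure.pi_withDensity _ fun _ => measurable_gaussianPDF 0 1, volume_pi]

theorem lintegral_pi_gaussianReal (d : ℕ) (F : (Fin d → ℝ) → ℝ≥0∞) :
    ∫⁻ x, F x ∂(Measure.pi fun _ : Fin d => gaussianReal 0 1) =
      ∫⁻ x, (∏ i, gaussianPDF 0 1 (x i)) * F x := by
  have hρ : Measurable fun x : Fin d → ℝ => ∏ i, gaussianPDF 0 1 (x i) :=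
    Finset.measurable_prod _ fun i _ => (measurable_gaussianPDF 0 1).comp (measurable_pi_apply i)
  rw [pi_gaussianReal_eq_withDensity, lintegral_withDensity_eq_lintegral_mul_non_measurable _ hρ
    (ae_of_all _ fun x => ENNReal.prod_lt_top fun i _ => gaussianPDF_lt_top)]
  rfl

theorem prod_gaussianPDF (d : ℕ) (x : Fin d → ℝ) :
    ∏ i, gaussianPDF 0 1 (x i) =
      ENNReal.ofReal (Real.exp (-(∑ i, x i ^ 2) / 2 - d * Real.log √(2 * Real.pi))) := by
  have h2π : 0 < √(2 * Real.pi) := by positivity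
  have hpdf : ∀ y, gaussianPDF 0 1 y =
      ENNReal.ofReal (Real.exp (-y ^ 2 / 2 - Real.log √(2 * Real.pi))) := by
    intro y
    rw [gaussianPDF_def, gaussianPDFReal_def, Real.exp_sub, Real.exp_log h2π]
    simp only [NNReal.coe_one, mul_one, sub_zero]
    ring_nf
  simp_rw [hpdf, ← ENNReal.ofReal_prod_of_nonneg (fun i _ => (Real.exp_pos _).le),
    ← Real.exp_sum, Finset.sum_sub_distrib, ← Finset.sum_div, Finset.sum_neg_distrib]
  simp

theorem prekopa_gaussian_finite_dim_general (d : ℕ) (g : (Fin d → ℝ) → ℝ → ℝ)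
    (hconc : ConcaveOn ℝ Set.univ
      (fun p : (Fin d → ℝ) × ℝ => g p.1 p.2 - (∑ i, p.1 i ^ 2) / 2))
    (c₁ c₂ θ : ℝ) (hθ : θ ∈ Set.Icc (0:ℝ) 1) :
    (∫⁻ x, ENNReal.ofReal (Real.exp (g x c₁))
        ∂(Measure.pi fun _ : Fin d => gaussianReal 0 1)) ^ θ *
      (∫⁻ x, ENNReal.ofReal (Real.exp (g x c₂))
        ∂(Measure.pi fun _ : Fin d => gaussianReal 0 1)) ^ (1 - θ) ≤
      ∫⁻ x, ENNReal.ofReal (Real.exp (g x (θ * c₁ + (1 - θ) * c₂)))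
        ∂(Measure.pi fun _ : Fin d => gaussianReal 0 1) := by
  set G : (Fin d → ℝ) × ℝ → ℝ := fun p =>
    g p.1 p.2 - (∑ i, p.1 i ^ 2) / 2 - d * Real.log √(2 * Real.pi)
  have hG : ConcaveOn ℝ univ G := hconc.sub (convexOn_const _ convex_univ)
  have hdensity : ∀ c, ∫⁻ x, ENNReal.ofReal (Real.exp (g x c))
      ∂(Measure.pi fun _ : Fin d => gaussianReal 0 1) =
        ∫⁻ x, ENNReal.ofReal (Real.exp (G (x, c))) := by
    intro c
    rw [lintegral_pi_gaussianReal]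
    refine lintegral_congr fun x => ?_
    rw [prod_gaussianPDF, ← ENNReal.ofReal_mul (Real.exp_pos _).le, ← Real.exp_add]
    congr 2
    simp only [G]
    ring
  rw [hdensity, hdensity, hdensity]
  exact hG.lintegral_exp_rpow_mul_rpow_le c₁ c₂ hθ

/-- Prékopa-type theorem (finite-dimensional consequence): if `(x,c) ↦ g x c − |x|²/2` is
concave and each `g(·,c)` satisfies the negative-part moment condition, then
`c ↦ log E[e^{g(Z,c)}]` is concave (with `log ∞ = ∞`), stated multiplicatively via
`∫ e^{g(·,c₁)} dμ)^θ (∫ e^{g(·,c₂)} dμ)^{1−θ} ≤ ∫ e^{g(·,θc₁+(1−θ)c₂)} dμ`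
for the standard Gaussian `μ` on `ℝ^d`. -/
theorem prekopa_gaussian_finite_dim (d : ℕ) (g : (Fin d → ℝ) → ℝ → ℝ)
    (hmeas : ∀ c : ℝ, Measurable fun x => g x c)
    (hconc : ConcaveOn ℝ Set.univ
      (fun p : (Fin d → ℝ) × ℝ => g p.1 p.2 - (∑ i, p.1 i ^ 2) / 2))
    (hint : ∀ c : ℝ, ∃ δ : ℝ, 0 < δ ∧
      Integrable (fun x => (max (-(g x c)) 0) ^ (1 + δ))
        (Measure.pi fun _ : Fin d => gaussianReal 0 1))
    (c₁ c₂ θ : ℝ) (hθ : θ ∈ Set.Icc (0:ℝ) 1) :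
    (∫⁻ x, ENNReal.ofReal (Real.exp (g x c₁))
        ∂(Measure.pi fun _ : Fin d => gaussianReal 0 1)) ^ θ *
      (∫⁻ x, ENNReal.ofReal (Real.exp (g x c₂))
        ∂(Measure.pi fun _ : Fin d => gaussianReal 0 1)) ^ (1 - θ) ≤
      ∫⁻ x, ENNReal.ofReal (Real.exp (g x (θ * c₁ + (1 - θ) * c₂)))
        ∂(Measure.pi fun _ : Fin d => gaussianReal 0 1) :=
  prekopa_gaussian_finite_dim_general d g hconc c₁ c₂ θ hθ
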